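/- arXiv:2207.12774 — 2 statements merged into one kernel-verified Lean document; each statement's English description precedes it below -/
import Mathlib

section
/- (Gyöngy–Krylov characterization of convergence in probability.) Let (Ω, 𝔉, ℙ) be a probability space, let X̄ be a complete separable metric space, and let X_n : Ω → X̄ (n ∈ ℕ) be measurable maps. Then the following are equivalent. (i) There exists a measurable X : Ω → X̄ such that X_n → X in probability, i.e. for every ε > 0, ℙ(dist(X_n, X) > ε) → 0 as n → ∞. (ii) For every pair of strictly increasing sequences (n_k)_{k∈ℕ} and (m_k)_{k∈ℕ} of natural numbers, there exists a further subsequence (k′) and a Borel probability measure μ on X̄ × X̄ such that the joint laws of (X_{n_{k′}}, X_{m_{k′}}) converge weakly to μ as k′ → ∞, and μ({(x,y) ∈ X̄ × X̄ : x = y}) = 1. -/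
open MeasureTheory Filter
open scoped ENNReal Topology BoundedContinuousFunction

/-!
If `X n → Y` in probability, so do the pairs `(X (n k), X (m k)) → (Y, Y)`, hence their laws
converge weakly to the law of `(Y, Y)`, which is carried by the diagonal; no extraction is needed.
Conversely, by the portmanteau theorem the joint laws of the extracted pairs charge the closed set
`{ε ≤ dist x y}` asymptotically at most as much as the limit does, i.e. not at all. Since every
pair of subsequences admits such a further subsequence, `(X n)` is Cauchy in probability. A fast
Cauchy subsequence then converges almost surely by Borel–Cantelli and completeness, and the whole
sequence follows it in probability.
-/

theorem Filter.tendsto_prod_atTop_of_forall_strictMono_subseq {α : Type*} {g : ℕ × ℕ → α}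
    {f : Filter α}
    (h : ∀ n m : ℕ → ℕ, StrictMono n → StrictMono m →
      ∃ φ : ℕ → ℕ, StrictMono φ ∧ Tendsto (fun k => g (n (φ k), m (φ k))) atTop f) :
    Tendsto g (atTop ×ˢ atTop) f := by
  refine tendsto_of_subseq_tendsto fun ns hns => ?_
  obtain ⟨ψ₁, hψ₁, hn⟩ := strictMono_subseq_of_tendsto_atTop (tendsto_fst.comp hns)
  obtain ⟨ψ₂, hψ₂, hm⟩ := strictMono_subseq_of_tendsto_atTop
    ((tendsto_snd.comp hns).comp hψ₁.tendsto_atTop)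
  obtain ⟨φ, -, hφ⟩ := h _ _ (hn.comp hψ₂) hm
  exact ⟨fun k => ψ₁ (ψ₂ (φ k)), hφ⟩

namespace MeasureTheory

variable {α ι E : Type*} {m : MeasurableSpace α} {μ : Measure α}

section WeakConvergence

variable [TopologicalSpace E] [MeasurableSpace E] [OpensMeasurableSpace E]

lemma ProbabilityMeasure.tendsto_map_iff_forall_integral_tendsto [IsProbabilityMeasure μ]
    {Z : ι → α → E} (hZ : ∀ i, AEMeasurable (Z i) μ) {L : Filter ι}
    {ν : ProbabilityMeasure E} :
    Tendsto (β := ProbabilityMeasure E)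
        (fun i => ⟨μ.map (Z i), Measure.isProbabilityMeasure_map (hZ i)⟩) L (𝓝 ν) ↔
      ∀ f : E →ᵇ ℝ,
        Tendsto (fun i => ∫ x, f (Z i x) ∂μ) L (𝓝 (∫ y, f y ∂(ν : Measure E))) := by
  refine ProbabilityMeasure.tendsto_iff_forall_integral_tendsto.trans
    (forall_congr' fun f => ?_)
  simp_rw [ProbabilityMeasure.coe_mk, integral_map (hZ _) f.continuous.aestronglyMeasurable]

lemma ProbabilityMeasure.tendsto_measure_of_isClosed_of_measure_eq_zero [HasOuterApproxClosed E]
    {L : Filter ι} {ν : ProbabilityMeasure E} {νs : ι → ProbabilityMeasure E}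
    (h : Tendsto νs L (𝓝 ν)) {C : Set E} (hC : IsClosed C) (hνC : (ν : Measure E) C = 0) :
    Tendsto (fun i => (νs i : Measure E) C) L (𝓝 0) := by
  simpa [hνC] using
    ProbabilityMeasure.tendsto_measure_of_null_frontier_of_tendsto' h
      (measure_mono_null hC.frontier_subset hνC)

end WeakConvergence

lemma measure_le_dist_eq_zero_of_measure_diagonal_eq_one [MetricSpace E]
    [MeasurableSpace E] [OpensMeasurableSpace (E × E)] {ν : Measure (E × E)}
    [IsProbabilityMeasure ν] (hν : ν {q | q.1 = q.2} = 1) {ε : ℝ} (hε : 0 < ε) :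
    ν {q | ε ≤ dist q.1 q.2} = 0 := by
  rw [← prob_compl_eq_zero_iff (isClosed_eq continuous_fst continuous_snd).measurableSet] at hν
  refine measure_mono_null ?_ hν
  rintro q (hq : ε ≤ dist q.1 q.2) (hdiag : q.1 = q.2)
  rw [hdiag, dist_self] at hq
  linarith

variable [PseudoMetricSpace E]

lemma tendstoInMeasure_iff_lt_dist {f : ι → α → E} {l : Filter ι} {g : α → E} :
    TendstoInMeasure μ f l g ↔
      ∀ ε, 0 < ε → Tendsto (fun i => μ {x | ε < dist (f i x) (g x)}) l (𝓝 0) := by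
  rw [tendstoInMeasure_iff_dist]
  refine ⟨fun h ε hε => ?_, fun h ε hε => ?_⟩
  · exact tendsto_of_tendsto_of_tendsto_of_le_of_le tendsto_const_nhds (h ε hε)
      (fun _ => zero_le) fun i => measure_mono fun x (hx : ε < _) => hx.le
  · exact tendsto_of_tendsto_of_tendsto_of_le_of_le tendsto_const_nhds
      (h (ε / 2) (half_pos hε)) (fun _ => zero_le)
      fun i => measure_mono fun x (hx : ε ≤ _) => (half_lt_self hε).trans_le hx

lemma TendstoInMeasure.prodMk {F : Type*} [PseudoMetricSpace F]
    {l : Filter ι} {f : ι → α → E} {f₀ : α → E} {g : ι → α → F} {g₀ : α → F}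
    (hf : TendstoInMeasure μ f l f₀) (hg : TendstoInMeasure μ g l g₀) :
    TendstoInMeasure μ (fun i x => (f i x, g i x)) l (fun x => (f₀ x, g₀ x)) := by
  intro ε hε
  refine tendsto_of_tendsto_of_tendsto_of_le_of_le tendsto_const_nhds
    (by simpa using (hf ε hε).add (hg ε hε)) (fun _ => zero_le) fun i => ?_
  refine (measure_mono fun x hx => ?_).trans (measure_union_le _ _)
  simpa [Prod.edist_eq, le_max_iff] using hx

def CauchyInMeasure (μ : Measure α) (f : ℕ → α → E) : Prop :=
  ∀ ε, 0 < ε →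
    Tendsto (fun p : ℕ × ℕ => μ {x | ε ≤ dist (f p.1 x) (f p.2 x)})
      (atTop ×ˢ atTop) (𝓝 0)

lemma ae_cauchySeq_of_measure_two_inv_pow_le_dist_succ_le {g : ℕ → α → E}
    (hg : ∀ k, μ {x | (2⁻¹ : ℝ) ^ k ≤ dist (g k x) (g (k + 1) x)} ≤ 2⁻¹ ^ k) :
    ∀ᵐ x ∂μ, CauchySeq fun k => g k x := by
  have hsum : ∑' k, μ {x | (2⁻¹ : ℝ) ^ k ≤ dist (g k x) (g (k + 1) x)} ≠ ∞ :=
    ne_top_of_le_ne_top (by simp) (ENNReal.tsum_le_tsum hg)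
  -- Borel–Cantelli
  filter_upwards [ae_eventually_notMem hsum] with x hx
  refine cauchySeq_of_dist_le_of_summable _ (fun _ => le_rfl) ?_
  refine (summable_geometric_of_lt_one (by norm_num) (by norm_num : (2⁻¹ : ℝ) < 1)
    ).of_norm_bounded_eventually_nat ?_
  filter_upwards [hx] with k hk
  rw [Real.norm_of_nonneg dist_nonneg]
  exact (not_le.1 hk).le

namespace CauchyInMeasure

variable {f : ℕ → α → E}

lemma exists_strictMono_measure_two_inv_pow_le_dist_succ_le (hf : CauchyInMeasure μ f) :
    ∃ u : ℕ → ℕ, StrictMono u ∧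
      ∀ k, μ {x | (2⁻¹ : ℝ) ^ k ≤ dist (f (u k) x) (f (u (k + 1)) x)} ≤ 2⁻¹ ^ k := by
  have h : ∀ k, ∀ᶠ j in atTop, ∀ i ≥ j,
      μ {x | (2⁻¹ : ℝ) ^ k ≤ dist (f j x) (f i x)} ≤ 2⁻¹ ^ k := by
    intro k
    have hsmall := (hf ((2⁻¹ : ℝ) ^ k) (by positivity)).eventually
      (eventually_le_nhds (ENNReal.pow_pos (by simp) k : (0 : ℝ≥0∞) < 2⁻¹ ^ k))
    rw [prod_atTop_atTop_eq, eventually_atTop_prod_self'] at hsmall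
    obtain ⟨N, hN⟩ := hsmall
    exact eventually_atTop.2 ⟨N, fun j hj i hi => hN j hj i (hj.trans hi)⟩
  obtain ⟨u, hu, hu'⟩ := extraction_forall_of_eventually h
  exact ⟨u, hu, fun k => hu' k _ (hu (Nat.lt_succ_self k)).le⟩

lemma tendstoInMeasure_of_subseq (hf : CauchyInMeasure μ f) {u : ℕ → ℕ} {g : α → E}
    (hu : Tendsto u atTop atTop) (hg : TendstoInMeasure μ (fun k => f (u k)) atTop g) :
    TendstoInMeasure μ f atTop g := by
  rw [tendstoInMeasure_iff_dist] at hg ⊢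
  intro ε hε
  have hsplit : ∀ n, {x | ε ≤ dist (f n x) (g x)} ⊆
      {x | ε / 2 ≤ dist (f n x) (f (u n) x)} ∪ {x | ε / 2 ≤ dist (f (u n) x) (g x)} := by
    intro n x hx
    by_contra! h
    simp only [Set.mem_union, Set.mem_ofPred_eq, not_or, not_le] at h hx
    linarith [dist_triangle (f n x) (f (u n) x) (g x)]
  refine tendsto_of_tendsto_of_tendsto_of_le_of_le tendsto_const_nhds ?_ (fun _ => zero_le)
    fun n => (measure_mono (hsplit n)).trans (measure_union_le _ _)
  simpa using ((hf _ (half_pos hε)).comp (tendsto_id.prodMk hu)).add (hg _ (half_pos hε))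

theorem exists_tendstoInMeasure [CompleteSpace E] [MeasurableSpace E] [BorelSpace E]
    [IsFiniteMeasure μ] (hcauchy : CauchyInMeasure μ f)
    (hf : ∀ n, AEStronglyMeasurable (f n) μ) :
    ∃ g : α → E, Measurable g ∧ TendstoInMeasure μ f atTop g := by
  obtain ⟨u, hu, hfast⟩ := hcauchy.exists_strictMono_measure_two_inv_pow_le_dist_succ_le
  have hlim : ∀ᵐ x ∂μ, ∃ y, Tendsto (fun k => f (u k) x) atTop (𝓝 y) := by
    filter_upwards [ae_cauchySeq_of_measure_two_inv_pow_le_dist_succ_le hfast] with x hx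
    exact cauchySeq_tendsto_of_complete hx
  obtain ⟨g, hg, hfg⟩ :=
    measurable_limit_of_tendsto_metrizable_ae (fun k => (hf (u k)).aemeasurable) hlim
  exact ⟨g, hg, hcauchy.tendstoInMeasure_of_subseq hu.tendsto_atTop
    (tendstoInMeasure_of_tendsto_ae (fun k => hf (u k)) hfg)⟩

end CauchyInMeasure

end MeasureTheory

/-- The Gyöngy–Krylov characterization of convergence in probability
(Lemma 8.1 of the paper): a sequence of random variables with values in a
Polish space converges in probability iff for every pair of subsequences there
is a further joint subsequence whose joint laws converge weakly to a measure
concentrated on the diagonal. -/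
theorem stmt7 {Ω : Type*} [MeasurableSpace Ω] (P : Measure Ω) [IsProbabilityMeasure P]
    {Xbar : Type*} [MetricSpace Xbar] [CompleteSpace Xbar]
    [TopologicalSpace.SeparableSpace Xbar] [MeasurableSpace Xbar] [BorelSpace Xbar]
    (X : ℕ → Ω → Xbar) (hX : ∀ n, Measurable (X n)) :
    (∃ Y : Ω → Xbar, Measurable Y ∧
        ∀ ε : ℝ, 0 < ε →
          Filter.Tendsto (fun n => P {ω | ε < dist (X n ω) (Y ω)})
            Filter.atTop (nhds 0)) ↔
    (∀ n m : ℕ → ℕ, StrictMono n → StrictMono m →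
      ∃ φ : ℕ → ℕ, StrictMono φ ∧
      ∃ μ : Measure (Xbar × Xbar), IsProbabilityMeasure μ ∧
        (∀ f : BoundedContinuousFunction (Xbar × Xbar) ℝ,
          Filter.Tendsto (fun k => ∫ ω, f (X (n (φ k)) ω, X (m (φ k)) ω) ∂P)
            Filter.atTop (nhds (∫ q, f q ∂μ))) ∧
        μ {q : Xbar × Xbar | q.1 = q.2} = 1) := by
  have := UniformSpace.secondCountable_of_separable Xbar
  have hpair : ∀ n m : ℕ → ℕ, ∀ k, Measurable fun ω => (X (n k) ω, X (m k) ω) :=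
    fun n m k => (hX _).prodMk (hX _)
  constructor
  · rintro ⟨Y, hY, hXY⟩ n m hn hm
    rw [← tendstoInMeasure_iff_lt_dist] at hXY
    have hlaw := ((hXY.comp hn.tendsto_atTop).prodMk (hXY.comp hm.tendsto_atTop)
      ).tendstoInDistribution fun k => (hpair n m k).aemeasurable
    refine ⟨id, strictMono_id, P.map fun ω => (Y ω, Y ω),
      Measure.isProbabilityMeasure_map (hY.prodMk hY).aemeasurable,
      (ProbabilityMeasure.tendsto_map_iff_forall_integral_tendsto
        fun k => (hpair n m k).aemeasurable).1 hlaw.tendsto, ?_⟩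
    rw [Measure.map_apply (hY.prodMk hY)
      (isClosed_eq continuous_fst continuous_snd).measurableSet]
    simp
  · intro h
    have hcauchy : CauchyInMeasure P X := fun ε hε =>
      tendsto_prod_atTop_of_forall_strictMono_subseq fun n m hn hm => by
        obtain ⟨φ, hφ, μ, hμ, hweak, hdiag⟩ := h n m hn hm
        have hlaw := (ProbabilityMeasure.tendsto_map_iff_forall_integral_tendsto
          (ν := ⟨μ, hμ⟩) fun k => (hpair (n ∘ φ) (m ∘ φ) k).aemeasurable).2 hweak
        have hC : IsClosed {q : Xbar × Xbar | ε ≤ dist q.1 q.2} :=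
          isClosed_le continuous_const continuous_dist
        refine ⟨φ, hφ, ?_⟩
        simpa [Measure.map_apply (hpair _ _ _) hC.measurableSet] using
          ProbabilityMeasure.tendsto_measure_of_isClosed_of_measure_eq_zero hlaw hC
            (measure_le_dist_eq_zero_of_measure_diagonal_eq_one hdiag hε)
    obtain ⟨Y, hY, hXY⟩ := hcauchy.exists_tendstoInMeasure fun n => (hX n).aestronglyMeasurable
    exact ⟨Y, hY, tendstoInMeasure_iff_lt_dist.1 hXY⟩
end

section
/- Let (X, 𝒮, μ) be a measure space and let K ∈ ℕ. For each k ∈ {1, …, K}, let f_k ∈ L¹(X, μ) and let (B_{n,k})_{n∈ℕ} ⊆ 𝒮 be a sequence of pairwise disjoint measurable subsets of X. Then liminf_{n→∞} ( n · Σ_{k=1}^K ∫_{B_{n,k}} |f_k| dμ ) = 0. -/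
/-!
If `liminf n · g n` were some `ε > 0`, then eventually `g n ≥ ε / n`, and comparison with the
harmonic series would make `∑ g n` diverge. For `g n = Σ_k ∫_{B_{n,k}} |f_k|` the series does
converge: by disjointness, `∑_n ∫_{B_{n,k}} |f_k| = ∫_{⋃_n B_{n,k}} |f_k| ≤ ‖f_k‖₁`.
-/

open MeasureTheory Filter Function
open scoped ENNReal NNReal

theorem ENNReal.liminf_natCast_mul_eq_zero_of_tsum_ne_top {g : ℕ → ℝ≥0∞}
    (hg : ∑' n, g n ≠ ∞) : liminf (fun n : ℕ => (n : ℝ≥0∞) * g n) atTop = 0 := by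
  lift g to ℕ → ℝ≥0 using ENNReal.ne_top_of_tsum_ne_top hg
  have hsum : Summable fun n => (g n : ℝ) :=
    NNReal.summable_coe.2 (ENNReal.tsum_coe_ne_top_iff_summable.1 hg)
  by_contra hpos
  obtain ⟨ε, hε0, hε⟩ := exists_between (pos_iff_ne_zero.2 hpos)
  lift ε to ℝ≥0 using (hε.trans_le le_top).ne
  have hε0 : (0 : ℝ) < ε := by exact_mod_cast hε0
  have hev : ∀ᶠ n : ℕ in atTop, (ε : ℝ) < n * g n :=
    (eventually_lt_of_lt_liminf hε).mono fun n hn => by simp only at hn; exact_mod_cast hn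
  apply Real.not_summable_natCast_inv
  refine (hsum.mul_left (ε : ℝ)⁻¹).of_norm_bounded_eventually_nat ?_
  filter_upwards [hev, eventually_gt_atTop 0] with n hn hn0
  rw [norm_inv, Real.norm_natCast, le_inv_mul_iff₀ hε0, ← div_eq_mul_inv,
    div_le_iff₀ (by exact_mod_cast hn0), mul_comm]
  exact hn.le

theorem MeasureTheory.Integrable.tsum_setLIntegral_enorm_lt_top {X E : Type*}
    [MeasurableSpace X] [NormedAddCommGroup E] {μ : Measure X} {f : X → E}
    (hf : Integrable f μ) {B : ℕ → Set X} (hB : ∀ n, MeasurableSet (B n))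
    (hdisj : Pairwise (Disjoint on B)) : ∑' n, ∫⁻ x in B n, ‖f x‖ₑ ∂μ < ∞ := by
  rw [← lintegral_iUnion hB hdisj]
  exact (setLIntegral_le_lintegral _ _).trans_lt hf.2

/-- Lemma 8.2 of the paper: for finitely many integrable functions `f_k` on a
measure space and, for each `k`, a sequence `(B_{n,k})_n` of pairwise disjoint
measurable sets, one has `liminf_n ( n · Σ_k ∫_{B_{n,k}} |f_k| dμ ) = 0`. -/
theorem stmt8 {X : Type*} [MeasurableSpace X] (μ : Measure X) (K : ℕ)
    (f : Fin K → X → ℝ) (hf : ∀ k, Integrable (f k) μ)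
    (B : ℕ → Fin K → Set X) (hB : ∀ n k, MeasurableSet (B n k))
    (hdisj : ∀ k, Pairwise fun n n' => Disjoint (B n k) (B n' k)) :
    Filter.liminf
      (fun n : ℕ => (n : ℝ≥0∞) * ∑ k, ∫⁻ x in B n k, ENNReal.ofReal |f k x| ∂μ)
      Filter.atTop = 0 := by
  apply ENNReal.liminf_natCast_mul_eq_zero_of_tsum_ne_top
  simp_rw [← Real.enorm_eq_ofReal_abs]
  rw [Summable.tsum_finsetSum fun k _ => ENNReal.summable]
  exact (ENNReal.sum_lt_top.2 fun k _ =>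
    (hf k).tsum_setLIntegral_enorm_lt_top (fun n => hB n k) (hdisj k)).ne
end
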